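/- arXiv:2601.19698 — 2 statements merged into one kernel-verified Lean document; each statement's English description precedes it below -/
import Mathlib

section
/- Let L be a Lie algebra over a field K of characteristic 0, let U(L) be its universal enveloping algebra with canonical map i : L → U(L), and let e : Sym(L) → U(L) be the symmetrization map sending x₁⊙⋯⊙xₙ to (1/n!)·∑_{σ∈Σₙ} i(x_{σ(1)})⋯i(x_{σ(n)}). For every x ∈ L, let r_x : Sym(L) → Sym(L) be the unique derivation of the symmetric algebra with r_x(y) = [y,x] for y ∈ L. Then for every z ∈ Sym(L) and x ∈ L, one has e(r_x(z)) = [e(z), i(x)] = e(z)·i(x) − i(x)·e(z). -/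
/-!
Both sides are linear in `z` and `Sym(L)` is spanned by the monomials `y₁ ⋯ yₙ` with `yᵢ ∈ L`, so
it suffices to treat a monomial. By the Leibniz rule, `r_x` sends it to the sum over `k` of the
monomials with `yₖ` replaced by `[yₖ, x]`. The commutator with `i(x)` is a derivation of `U(L)`
and `[i(y), i(x)] = i [y, x]`, so it acts in the same way on every ordered product
`i(y_{σ 1}) ⋯ i(y_{σ n})`; summing over the permutations `σ` and reindexing gives the identity.
-/

noncomputable section

variable (K L : Type*) [Field K] [CharZero K] [LieRing L] [LieAlgebra K L]

inductive SymRel : TensorAlgebra K L → TensorAlgebra K L → Prop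
  | comm (x y : L) : SymRel (TensorAlgebra.ι K x * TensorAlgebra.ι K y)
      (TensorAlgebra.ι K y * TensorAlgebra.ι K x)

abbrev SymmL : Type _ := RingQuot (SymRel K L)

def symι : L →ₗ[K] SymmL K L :=
  (RingQuot.mkAlgHom K (SymRel K L)).toLinearMap ∘ₗ TensorAlgebra.ι K

open UniversalEnvelopingAlgebra

theorem map_list_ofFn_prod_of_leibniz {A F α : Type*} [Ring A] [FunLike F A A]
    [AddMonoidHomClass F A A] (D : F) (hD : ∀ a b : A, D (a * b) = D a * b + a * D b)
    (φ : α → A) (g : α → α) (hφ : ∀ a, D (φ a) = φ (g a)) :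
    ∀ {n : ℕ} (f : Fin n → α), D (List.ofFn fun j => φ (f j)).prod
      = ∑ k, (List.ofFn fun j => φ (Function.update f k (g (f k)) j)).prod
  | 0, _ => by simpa using hD 1 1
  | _ + 1, f => by
    induction f using Fin.consCases with
    | cons a f =>
      simp [hD, hφ, map_list_ofFn_prod_of_leibniz D hD φ g hφ f, Fin.sum_univ_succ,
        Finset.mul_sum, ← Fin.cons_update]

section

variable {K L}
omit [CharZero K]

theorem span_list_ofFn_prod_symι_eq_top :
    Submodule.span K {w : SymmL K L | ∃ (n : ℕ) (f : Fin n → L),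
      (List.ofFn fun j => symι K L (f j)).prod = w} = ⊤ := by
  have hgen : Algebra.adjoin K (Set.range (symι K L)) = ⊤ := by
    rw [symι, LinearMap.coe_comp, Set.range_comp, AlgHom.coe_toLinearMap, ← AlgHom.map_adjoin,
      TensorAlgebra.adjoin_range_ι, Algebra.map_top, AlgHom.range_eq_top]
    exact RingQuot.mkAlgHom_surjective K _
  rw [eq_top_iff, ← Algebra.top_toSubmodule, ← hgen, Algebra.adjoin_eq_span]
  refine Submodule.span_mono ?_
  rw [Submonoid.closure_eq_image_prod]
  rintro _ ⟨l, hl, rfl⟩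
  choose f hf using fun j : Fin l.length => hl _ (l.get_mem j)
  exact ⟨l.length, f, by simp only [hf, List.ofFn_get]⟩

theorem UniversalEnvelopingAlgebra.ι_lie (x y : L) :
    ι K ⁅x, y⁆ = ι K x * ι K y - ι K y * ι K x := by
  -- the commutator Lie structure of an associative algebra is not a global instance
  let _ := LieRing.ofAssociativeRing (A := UniversalEnvelopingAlgebra K L)
  let _ := LieAlgebra.ofAssociativeAlgebra (R := K) (A := UniversalEnvelopingAlgebra K L)
  rw [LieHom.map_lie, Ring.lie_def]

variable (K) in
def UniversalEnvelopingAlgebra.symmetrize {n : ℕ} (f : Fin n → L) :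
    UniversalEnvelopingAlgebra K L :=
  ∑ σ : Equiv.Perm (Fin n), (List.ofFn fun j => ι K (f (σ j))).prod

theorem UniversalEnvelopingAlgebra.symmetrize_mul_ι_sub_ι_mul_symmetrize (x : L) {n : ℕ}
    (f : Fin n → L) :
    symmetrize K f * ι K x - ι K x * symmetrize K f
      = ∑ k, symmetrize K (Function.update f k ⁅f k, x⁆) := by
  let ad : UniversalEnvelopingAlgebra K L →+ UniversalEnvelopingAlgebra K L :=
    AddMonoidHom.mulRight (ι K x) - AddMonoidHom.mulLeft (ι K x)
  have had_leibniz (a b : UniversalEnvelopingAlgebra K L) : ad (a * b) = ad a * b + a * ad b := by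
    simp only [ad, AddMonoidHom.sub_apply, AddMonoidHom.coe_mulRight, AddMonoidHom.coe_mulLeft]
    noncomm_ring
  have hcomm (σ : Equiv.Perm (Fin n)) := map_list_ofFn_prod_of_leibniz ad had_leibniz (ι K)
    (⁅·, x⁆) (fun y => (ι_lie y x).symm) (f ∘ σ)
  simp only [ad, AddMonoidHom.sub_apply, AddMonoidHom.coe_mulRight, AddMonoidHom.coe_mulLeft,
    Function.comp_apply] at hcomm
  simp only [symmetrize, Finset.sum_mul, Finset.mul_sum, ← Finset.sum_sub_distrib, hcomm]
  rw [Finset.sum_comm (s := Finset.univ (α := Fin n))]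
  refine Finset.sum_congr rfl fun σ _ => Fintype.sum_equiv σ _ _ fun p => ?_
  simp [Function.update_apply_equiv_apply]

end

theorem stmt0
    (e : SymmL K L →ₗ[K] UniversalEnvelopingAlgebra K L)
    (he : ∀ (n : ℕ) (f : Fin n → L),
      e (List.ofFn fun j => symι K L (f j)).prod
        = (n.factorial : K)⁻¹ •
            ∑ σ : Equiv.Perm (Fin n),
              (List.ofFn fun j =>
                (UniversalEnvelopingAlgebra.ι K (f (σ j)) :
                  UniversalEnvelopingAlgebra K L)).prod)
    (x : L) (r : SymmL K L →ₗ[K] SymmL K L)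
    (hleib : ∀ a b : SymmL K L, r (a * b) = r a * b + a * r b)
    (hr : ∀ y : L, r (symι K L y) = symι K L ⁅y, x⁆)
    (z : SymmL K L) :
    e (r z) = e z * UniversalEnvelopingAlgebra.ι K x
      - UniversalEnvelopingAlgebra.ι K x * e z := by
  have he' : ∀ (n : ℕ) (f : Fin n → L), e (List.ofFn fun j => symι K L (f j)).prod
      = (n.factorial : K)⁻¹ • symmetrize K f := he
  have hmonomial (n : ℕ) (f : Fin n → L) :
      e (r (List.ofFn fun j => symι K L (f j)).prod)
        = e (List.ofFn fun j => symι K L (f j)).prod * ι K x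
          - ι K x * e (List.ofFn fun j => symι K L (f j)).prod := by
    rw [map_list_ofFn_prod_of_leibniz r hleib (symι K L) (⁅·, x⁆) hr, map_sum]
    simp only [he', smul_mul_assoc, mul_smul_comm, ← smul_sub, ← Finset.smul_sum,
      symmetrize_mul_ι_sub_ι_mul_symmetrize]
  have h : e ∘ₗ r = (LinearMap.mulRight K (ι K x) - LinearMap.mulLeft K (ι K x)) ∘ₗ e :=
    LinearMap.ext_on span_list_ofFn_prod_symι_eq_top (by rintro _ ⟨n, f, rfl⟩; exact hmonomial n f)
  exact LinearMap.congr_fun h z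

end
end

section
/- Let L be the graded Lie subalgebra of M spanned by e₁+e₂, e₃, h₁, h₂ (M as in the previous context). Then L is closed under the differential and the bracket of M, and for y = y₂(e₁+e₂) + y₃e₃ ∈ L¹, the Maurer–Cartan equation dy + (1/2)[y,y] = 0 holds if and only if 2y₃ = y₂² and y₂y₃ = 0, equivalently if and only if y₃ = y₂²/2 and y₂³ = 0. -/
/-!
STATEMENT 7: Let `L ⊆ M` be the graded subspace spanned by `e₁+e₂, e₃, h₁, h₂` of the
DG-Lie algebra `M` of the previous context (modelled as `V = (K×K×K) × (K×K)`, degree-1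
part × degree-2 part). Then `L` is closed under the differential and the bracket of `M`,
and for `y = y₂(e₁+e₂) + y₃e₃ ∈ L¹` the Maurer–Cartan equation `dy + (1/2)[y,y] = 0` holds
iff `2y₃ = y₂²` and `y₂y₃ = 0`, iff `y₃ = y₂²/2` and `y₂³ = 0`.
-/

variable (K : Type*) [Field K] [CharZero K]

/-- The full differential `D : M → M`. -/
def DM (X : (K × K × K) × (K × K)) : (K × K × K) × (K × K) := (0, (X.1.2.2, 0))

/-- The full bracket `M × M → M`. -/
def BrM (X Y : (K × K × K) × (K × K)) : (K × K × K) × (K × K) :=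
  (0, (-(X.1.2.1 * Y.1.2.1),
    -(X.1.1 * Y.1.1) + X.1.2.1 * Y.1.2.1 + X.1.2.1 * Y.1.2.2 + X.1.2.2 * Y.1.2.1))

/-- The subspace spanned by `e₁+e₂, e₃, h₁, h₂`: its degree-1 part consists of the vectors
whose `e₁`- and `e₂`-coordinates agree, and its degree-2 part is everything. -/
def LsubM : Set ((K × K × K) × (K × K)) := {X | X.1.1 = X.1.2.1}

/-- `LsubM` as a submodule. -/
def Lsub' : Submodule K ((K × K × K) × (K × K)) where
  carrier := LsubM K
  add_mem' := by
    intro a b ha hb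
    simpa [LsubM] using congrArg₂ (· + ·) ha hb
  zero_mem' := rfl
  smul_mem' := by
    intro c x hx
    simpa [LsubM] using congrArg (c * ·) hx

theorem stmt7 :
    -- L is indeed the span of e₁+e₂, e₃, h₁, h₂:
    (LsubM K = ↑(Submodule.span K
      ({(((1 : K), (1 : K), (0 : K)), ((0 : K), (0 : K))),
        (((0 : K), (0 : K), (1 : K)), ((0 : K), (0 : K))),
        (((0 : K), (0 : K), (0 : K)), ((1 : K), (0 : K))),
        (((0 : K), (0 : K), (0 : K)), ((0 : K), (1 : K)))} :
        Set ((K × K × K) × (K × K))))) ∧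
    -- L is closed under the differential:
    (∀ X ∈ LsubM K, DM K X ∈ LsubM K) ∧
    -- L is closed under the bracket:
    (∀ X ∈ LsubM K, ∀ Y ∈ LsubM K, BrM K X Y ∈ LsubM K) ∧
    -- Maurer–Cartan for y = y₂(e₁+e₂) + y₃e₃:
    (∀ y₂ y₃ : K,
      (DM K ((y₂, y₂, y₃), 0) + (2 : K)⁻¹ • BrM K ((y₂, y₂, y₃), 0) ((y₂, y₂, y₃), 0) = 0
        ↔ (2 * y₃ = y₂ ^ 2 ∧ y₂ * y₃ = 0)) ∧
      (DM K ((y₂, y₂, y₃), 0) + (2 : K)⁻¹ • BrM K ((y₂, y₂, y₃), 0) ((y₂, y₂, y₃), 0) = 0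
        ↔ (y₃ = y₂ ^ 2 / 2 ∧ y₂ ^ 3 = 0))) := by
  refine ⟨?_, ?_, ?_, ?_⟩
  · apply Set.Subset.antisymm
    · rintro ⟨⟨a, b, c⟩, d, e⟩ hX
      simp only [LsubM, Set.mem_setOf_eq] at hX
      subst hX
      have : (((a,a,c),(d,e)) : (K × K × K) × (K × K)) =
          a • (((1:K),(1:K),(0:K)),((0:K),(0:K))) + c • (((0:K),(0:K),(1:K)),((0:K),(0:K)))
          + d • (((0:K),(0:K),(0:K)),((1:K),(0:K))) + e • (((0:K),(0:K),(0:K)),((0:K),(1:K))) := by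
        simp [Prod.ext_iff]
      rw [this]
      apply Submodule.add_mem _ (Submodule.add_mem _ (Submodule.add_mem _ _ _) _) _ <;>
        exact Submodule.smul_mem _ _ (Submodule.subset_span (by simp))
    · exact Submodule.span_le (p := Lsub' K) |>.mpr
        (by rintro X hX
            simp only [Set.mem_insert_iff, Set.mem_singleton_iff] at hX
            rcases hX with h | h | h | h <;> subst h <;>
              simp [Lsub', LsubM, Submodule.mem_mk, AddSubmonoid.mem_mk, AddSubsemigroup.mem_mk])
  · intro X hX
    simp [LsubM, DM]
  · intro X hX Y hY
    simp [LsubM, BrM]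
  · intro y₂ y₃
    have h2 : (2 : K) ≠ 0 := two_ne_zero
    have key : DM K ((y₂, y₂, y₃), 0) + (2 : K)⁻¹ • BrM K ((y₂, y₂, y₃), 0) ((y₂, y₂, y₃), 0) = 0
        ↔ (2 * y₃ = y₂ ^ 2 ∧ y₂ * y₃ = 0) := by
      simp only [DM, BrM, Prod.ext_iff, Prod.mk_add_mk, Prod.smul_mk, smul_eq_mul,
        Prod.mk_eq_zero, smul_zero, add_zero, zero_add, Prod.fst_zero, Prod.snd_zero,
        true_and]
      constructor
      · rintro ⟨ha, hb⟩
        constructor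
        · linear_combination 2 * ha
        · linear_combination hb
      · rintro ⟨ha, hb⟩
        constructor
        · field_simp
          linear_combination ha
        · linear_combination hb
    refine ⟨key, key.trans ?_⟩
    constructor
    · rintro ⟨ha, hb⟩
      refine ⟨by field_simp; linear_combination ha, by linear_combination -y₂ * ha + 2 * hb⟩
    · rintro ⟨ha, hb⟩
      refine ⟨by field_simp at ha ⊢; linear_combination ha, ?_⟩
      have : y₂ * y₃ = y₂ ^ 3 / 2 := by rw [ha]; ring
      rw [this, hb]; ring
end
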